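/- arXiv:2508.13569 — 7 statements merged into one kernel-verified Lean document; each statement's English description precedes it below -/
import Mathlib

section
/- If $f$ is $M$-Lipschitz-bounded in subgradients, $\rho$-weakly convex with respect to minimizers, sharp with constant $m > 0$, and the initial distance satisfies $\mathrm{dist}(x_0, \mathcal{X}^*) \le m/\rho$, then the condition number satisfies $\bar{\mu} \ge m/(2M) > 0$. -/
open scoped RealInnerProductSpace

/-- Weak convexity + sharpness + bounded subgradients + small initial distance
imply the pointwise angle bound ⟨u, x - x*⟩ ≥ (m/(2M))‖u‖‖x - x*‖, i.e. μ̄ ≥ m/(2M) > 0. -/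
theorem stmt1 {n : ℕ} (f : EuclideanSpace ℝ (Fin n) → ℝ)
    (Csub : EuclideanSpace ℝ (Fin n) → Set (EuclideanSpace ℝ (Fin n)))
    (Xstar : Set (EuclideanSpace ℝ (Fin n)))
    (hXstar : Xstar = {x | ∀ y, f x ≤ f y})
    (x0 : EuclideanSpace ℝ (Fin n))
    (S : Set (EuclideanSpace ℝ (Fin n)))
    (hS : S = {x | Metric.infDist x Xstar ≤ Metric.infDist x0 Xstar})
    (hLip : LocallyLipschitzOn S f)
    (M ρ m : ℝ) (hM : 0 < M) (hρ : 0 ≤ ρ) (hm : 0 < m)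
    (hbound : ∀ xs ∈ Xstar, ∀ x ∈ S \ Xstar, ∀ u ∈ Csub x, ‖u‖ ≤ M)
    (hweak : ∀ xs ∈ Xstar, ∀ x ∈ S \ Xstar, ∀ u ∈ Csub x,
      f xs ≥ f x + ⟪u, xs - x⟫ - ρ / 2 * ‖xs - x‖ ^ 2)
    (hsharp : ∀ xs ∈ Xstar, ∀ x ∈ S \ Xstar, f x - f xs ≥ m * ‖x - xs‖)
    (hdist : Metric.infDist x0 Xstar ≤ m / ρ) :
    (0 < m / (2 * M)) ∧
      ∀ xs ∈ Xstar, ∀ x ∈ S \ Xstar, ∀ u ∈ Csub x, u ≠ 0 →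
        ⟪u, x - xs⟫ ≥ m / (2 * M) * (‖u‖ * ‖x - xs‖) := by
  refine ⟨by positivity, ?_⟩
  intro xs hxs x hx u hu _hu0
  have hxS : x ∈ S := hx.1
  have hxP : x ∉ Xstar := hx.2
  have hc0 : (0:ℝ) ≤ Metric.infDist x0 Xstar := Metric.infDist_nonneg
  have hmemS : ∀ z : EuclideanSpace ℝ (Fin n),
      Metric.infDist z Xstar ≤ Metric.infDist x0 Xstar → z ∈ S := by
    intro z hz; rw [hS]; exact hz
  have hSmem : Metric.infDist x Xstar ≤ Metric.infDist x0 Xstar := by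
    rw [hS] at hxS; exact hxS
  have hxS : x ∈ S := hx.1
  have hPmemS : ∀ z ∈ Xstar, z ∈ S := fun z hz =>
    hmemS z (by rw [Metric.infDist_zero_of_mem hz]; exact hc0)
  have hfeq : ∀ a ∈ Xstar, f a = f xs := by
    intro a ha
    rw [hXstar] at ha hxs
    exact le_antisymm (ha xs) (hxs a)
  -- Step A: closure Xstar ⊆ Xstar
  have hclo : ∀ z ∈ closure Xstar, z ∈ Xstar := by
    intro z hz
    have hzS : z ∈ S := hmemS z (by rw [Metric.infDist_zero_of_mem_closure hz]; exact hc0)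
    obtain ⟨K, t, ht, hK⟩ := hLip hzS
    obtain ⟨ε, hε, hball⟩ := Metric.mem_nhdsWithin_iff.1 ht
    have hzt : z ∈ t := hball ⟨Metric.mem_ball_self hε, hzS⟩
    have hfz : f z ≤ f xs := by
      by_contra hlt
      push_neg at hlt
      set η : ℝ := min ε ((f z - f xs) / (K + 1)) with hη
      have hη0 : 0 < η := by
        apply lt_min hε
        have : (0:ℝ) < f z - f xs := by linarith
        positivity
      obtain ⟨xs', hxs', hdzxs⟩ := Metric.mem_closure_iff.1 hz η hη0
      have hxs'S : xs' ∈ S := hPmemS xs' hxs'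
      have hxs't : xs' ∈ t := hball ⟨by
        rw [Metric.mem_ball, dist_comm]
        exact lt_of_lt_of_le hdzxs (min_le_left _ _), hxs'S⟩
      have hdd : dist (f z) (f xs') ≤ K * dist z xs' := hK.dist_le_mul z hzt xs' hxs't
      have h1 : f z - f xs ≤ (K:ℝ) * η := by
        have e : f xs' = f xs := hfeq xs' hxs'
        rw [e] at hdd
        have habs : f z - f xs ≤ dist (f z) (f xs) := by
          rw [Real.dist_eq]; exact le_abs_self _
        have h2 : (K:ℝ) * dist z xs' ≤ (K:ℝ) * η :=
          mul_le_mul_of_nonneg_left hdzxs.le K.coe_nonneg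
        linarith
      have h3 : η ≤ (f z - f xs) / (K + 1) := min_le_right _ _
      have hK1 : (0:ℝ) < (K:ℝ) + 1 := by positivity
      have h4 : (K:ℝ) * η ≤ (K:ℝ) * ((f z - f xs) / (K + 1)) :=
        mul_le_mul_of_nonneg_left h3 K.coe_nonneg
      have h5 : (K:ℝ) * ((f z - f xs) / (K + 1)) < f z - f xs := by
        rw [mul_div_assoc'] at *
        rw [div_lt_iff₀ hK1]
        nlinarith [K.coe_nonneg]
      linarith
    rw [hXstar] at hxs ⊢
    exact fun y => le_trans hfz (hxs y)
  have hclosed : IsClosed Xstar := isClosed_of_closure_subset hclo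
  -- Step B: infDist x Xstar > 0, so infDist x0 Xstar > 0
  have hδpos : 0 < Metric.infDist x Xstar :=
    (hclosed.notMem_iff_infDist_pos ⟨xs, hxs⟩).1 hxP
  have hcpos : 0 < Metric.infDist x0 Xstar := lt_of_lt_of_le hδpos hSmem
  -- Step C: ρ * ‖x - xs‖ ≤ m
  have hA2 : ρ * ‖x - xs‖ ≤ m := by
    rcases eq_or_lt_of_le hρ with h0 | hρpos
    · rw [← h0, zero_mul]; exact hm.le
    · -- Xstar is not open
      have hnotopen : ¬ IsOpen Xstar := by
        intro hop
        rcases isClopen_iff.1 ⟨hclosed, hop⟩ with h | h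
        · rw [h] at hxs; exact hxs
        · rw [h] at hxP; exact hxP (Set.mem_univ x)
      have hz' : ∃ z ∈ Xstar, z ∉ interior Xstar := by
        by_contra hno
        push_neg at hno
        exact hnotopen (subset_interior_iff_isOpen.1 hno)
      obtain ⟨z, hzX, hzint⟩ := hz'
      have hzS : z ∈ S := hPmemS z hzX
      obtain ⟨K, t, ht, hK⟩ := hLip hzS
      obtain ⟨ε, hε, hball⟩ := Metric.mem_nhdsWithin_iff.1 ht
      have hzt : z ∈ t := hball ⟨Metric.mem_ball_self hε, hzS⟩
      -- every minimizer equals z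
      have huniq : ∀ a ∈ Xstar, a = z := by
        intro a ha
        by_contra hne
        set D : ℝ := dist z a with hD
        have hD0 : 0 < D := dist_pos.2 fun h => hne h.symm
        set r : ℝ := min (min ε (Metric.infDist x0 Xstar)) (m * D / (2 * ((K:ℝ) + m))) with hr
        have hr0 : 0 < r := by
          apply lt_min (lt_min hε hcpos)
          positivity
        -- get y ∉ Xstar near z
        have : ¬ Metric.ball z r ⊆ Xstar := by
          intro hsub
          exact hzint (mem_interior.2 ⟨Metric.ball z r, hsub, Metric.isOpen_ball,
            Metric.mem_ball_self hr0⟩)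
        obtain ⟨y, hyb, hyX⟩ := Set.not_subset.1 this
        have hdyz : dist y z < r := Metric.mem_ball.1 hyb
        have hyS : y ∈ S := hmemS y (by
          calc Metric.infDist y Xstar ≤ dist y z := Metric.infDist_le_dist_of_mem hzX
            _ ≤ r := hdyz.le
            _ ≤ Metric.infDist x0 Xstar := le_trans (min_le_left _ _) (min_le_right _ _))
        have hyt : y ∈ t := hball ⟨Metric.mem_ball.2
          (lt_of_lt_of_le hdyz (le_trans (min_le_left _ _) (min_le_left _ _))), hyS⟩
        have hfy : f y - f z ≤ (K:ℝ) * r := by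
          have h1 : dist (f y) (f z) ≤ K * dist y z := hK.dist_le_mul y hyt z hzt
          have h2 : f y - f z ≤ dist (f y) (f z) := by rw [Real.dist_eq]; exact le_abs_self _
          have h3 : (K:ℝ) * dist y z ≤ (K:ℝ) * r :=
            mul_le_mul_of_nonneg_left hdyz.le K.coe_nonneg
          linarith
        have hsh : f y - f a ≥ m * ‖y - a‖ := hsharp a ha y ⟨hyS, hyX⟩
        have hya : dist y a ≥ D - r := by
          have := dist_triangle z y a
          rw [dist_comm z y] at this
          linarith
        have hna : ‖y - a‖ = dist y a := (dist_eq_norm y a).symm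
        have hfz : f z = f xs := hfeq z hzX
        have hfa : f a = f xs := hfeq a ha
        have hrle : r ≤ m * D / (2 * ((K:ℝ) + m)) := min_le_right _ _
        have hKm : (0:ℝ) < (K:ℝ) + m := by positivity
        -- m * (D - r) ≤ m * ‖y - a‖ ≤ f y - f a = f y - f z ≤ K r
        have hmain : m * (D - r) ≤ (K:ℝ) * r := by
          have h4 : m * (D - r) ≤ m * dist y a := by
            apply mul_le_mul_of_nonneg_left hya hm.le
          rw [← hna] at h4
          linarith
        have h5 : ((K:ℝ) + m) * r ≤ ((K:ℝ) + m) * (m * D / (2 * ((K:ℝ) + m))) :=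
          mul_le_mul_of_nonneg_left hrle hKm.le
        have h6 : ((K:ℝ) + m) * (m * D / (2 * ((K:ℝ) + m))) = m * D / 2 := by
          field_simp
        nlinarith [mul_pos hm hD0]
      have hXsing : Xstar = {xs} := by
        have hzxs : xs = z := huniq xs hxs
        ext a
        constructor
        · intro ha; rw [Set.mem_singleton_iff, huniq a ha, hzxs]
        · intro ha; rw [Set.mem_singleton_iff.1 ha]; exact hxs
      have hdle : ‖x - xs‖ ≤ m / ρ := by
        have h1 : Metric.infDist x Xstar = dist x xs := by
          rw [hXsing, Metric.infDist_singleton]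
        have h2 := le_trans hSmem hdist
        rw [h1, dist_eq_norm] at h2
        exact h2
      calc ρ * ‖x - xs‖ ≤ ρ * (m / ρ) := mul_le_mul_of_nonneg_left hdle hρpos.le
        _ = m := by field_simp
  -- Final arithmetic
  have hw := hweak xs hxs x hx u hu
  have hshp := hsharp xs hxs x hx
  have hub : ‖u‖ ≤ M := hbound xs hxs x hx u hu
  have hinn : ⟪u, xs - x⟫ = -⟪u, x - xs⟫ := by
    rw [← neg_sub x xs, inner_neg_right]
  have hnrev : ‖xs - x‖ = ‖x - xs‖ := norm_sub_rev _ _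
  rw [hinn, hnrev] at hw
  have hd0 : (0:ℝ) ≤ ‖x - xs‖ := norm_nonneg _
  have hu0 : (0:ℝ) ≤ ‖u‖ := norm_nonneg _
  rw [ge_iff_le, div_mul_eq_mul_div, div_le_iff₀ (by positivity : (0:ℝ) < 2 * M)]
  nlinarith [mul_le_mul_of_nonneg_right hub hd0, mul_le_mul_of_nonneg_right hA2 hd0, mul_nonneg hd0 hd0, mul_le_mul_of_nonneg_left (mul_le_mul_of_nonneg_right hA2 hd0) hM.le, mul_le_mul_of_nonneg_left (mul_le_mul_of_nonneg_right hub hd0) hm.le]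
end

section
/- If $f$ has subgradients bounded by $M$, is $\gamma$-quasar convex with respect to minimizers, and is sharp with constant $m > 0$, then for all $x^* \in \mathcal{X}^*$, $x \in S \setminus \mathcal{X}^*$, and $u \in \partial^\circ f(x)$ with $u \ne 0$, we have $\langle u, x - x^* \rangle \ge \frac{\gamma m}{M} \|u\| \|x - x^*\|$; hence the condition number satisfies $\bar{\mu} \ge \gamma m / M > 0$. -/
open scoped RealInnerProductSpace

/-- Quasar convexity + sharpness + bounded subgradients imply
⟨u, x - x*⟩ ≥ (γm/M)‖u‖‖x - x*‖, hence μ̄ ≥ γm/M > 0. -/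
theorem stmt2 {n : ℕ} (f : EuclideanSpace ℝ (Fin n) → ℝ)
    (Csub : EuclideanSpace ℝ (Fin n) → Set (EuclideanSpace ℝ (Fin n)))
    (Xstar : Set (EuclideanSpace ℝ (Fin n)))
    (hXstar : Xstar = {x | ∀ y, f x ≤ f y})
    (x0 : EuclideanSpace ℝ (Fin n))
    (S : Set (EuclideanSpace ℝ (Fin n)))
    (hS : S = {x | Metric.infDist x Xstar ≤ Metric.infDist x0 Xstar})
    (hLip : LocallyLipschitzOn S f)
    (M γ m : ℝ) (hM : 0 < M) (hγ : γ ∈ Set.Ioc (0 : ℝ) 1) (hm : 0 < m)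
    (hbound : ∀ xs ∈ Xstar, ∀ x ∈ S \ Xstar, ∀ u ∈ Csub x, ‖u‖ ≤ M)
    (hquasar : ∀ xs ∈ Xstar, ∀ x ∈ S \ Xstar, ∀ u ∈ Csub x,
      f xs ≥ f x + (1 / γ) * ⟪u, xs - x⟫)
    (hsharp : ∀ xs ∈ Xstar, ∀ x ∈ S \ Xstar, f x - f xs ≥ m * ‖x - xs‖) :
    (0 < γ * m / M) ∧
      ∀ xs ∈ Xstar, ∀ x ∈ S \ Xstar, ∀ u ∈ Csub x, u ≠ 0 →
        ⟪u, x - xs⟫ ≥ γ * m / M * (‖u‖ * ‖x - xs‖) := by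
  obtain ⟨hγ0, hγ1⟩ := hγ
  refine ⟨by positivity, ?_⟩
  intro xs hxs x hx u hu _
  have hq := hquasar xs hxs x hx u hu
  have hs := hsharp xs hxs x hx
  have hb := hbound xs hxs x hx u hu
  have h1 : ⟪u, x - xs⟫ = -⟪u, xs - x⟫ := by
    rw [← inner_neg_right]; congr 1; abel
  have h2 : (1 / γ) * ⟪u, xs - x⟫ ≤ f xs - f x := by linarith
  have h3 : ⟪u, xs - x⟫ ≤ γ * (f xs - f x) := by
    have := mul_le_mul_of_nonneg_left h2 hγ0.le
    calc ⟪u, xs - x⟫ = γ * ((1/γ) * ⟪u, xs - x⟫) := by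
          field_simp
      _ ≤ γ * (f xs - f x) := this
  have h4 : γ * m * ‖x - xs‖ ≤ ⟪u, x - xs⟫ := by
    rw [h1]
    nlinarith [hs]
  have h5 : γ * m / M * (‖u‖ * ‖x - xs‖) ≤ γ * m * ‖x - xs‖ := by
    rw [div_mul_eq_mul_div, div_le_iff₀ hM]
    have : ‖u‖ * ‖x - xs‖ ≤ M * ‖x - xs‖ :=
      mul_le_mul_of_nonneg_right hb (norm_nonneg _)
    nlinarith [norm_nonneg (x - xs), mul_pos hγ0 hm]
  linarith
end

section
/- The function $f(x) = e^{-1/x^4}$ for $x \ne 0$ with $f(0) = 0$ is not quasar convex with respect to its minimizer $0$: there is no $\gamma > 0$ such that $\gamma f(x) \le f'(x)\cdot x$ for all $x \ne 0$. Specifically, $\frac{f'(x)\, x}{f(x)} = \frac{4}{x^4}$ for $x \ne 0$, which tends to $0$ as $x \to \infty$. -/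
/-- f(x) = exp(-1/x⁴) (with f(0) = 0) is not quasar convex w.r.t. its
minimizer 0: for every γ > 0 there exists x ≠ 0 with f'(x)·x < γ·f(x). -/
theorem stmt7 (f : ℝ → ℝ)
    (hf : f = fun x : ℝ => if x = 0 then 0 else Real.exp (-1 / x ^ 4)) :
    ∀ γ : ℝ, 0 < γ → ∃ x : ℝ, x ≠ 0 ∧ ∃ d : ℝ, HasDerivAt f d x ∧ d * x < γ * f x := by
  intro γ hγ
  set x : ℝ := max 1 (4 / γ) + 1 with hxdef
  have hx1 : (1:ℝ) ≤ x := by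
    rw [hxdef]; have := le_max_left (1:ℝ) (4/γ); linarith
  have hxgt : 4 / γ < x := by
    rw [hxdef]; have := le_max_right (1:ℝ) (4/γ); linarith
  have hx0 : x ≠ 0 := by positivity
  have hx4 : x ^ 4 ≠ 0 := pow_ne_zero _ hx0
  refine ⟨x, hx0, ?_⟩
  have hg : HasDerivAt (fun y : ℝ => -1 / y ^ 4)
      ((0 * x ^ 4 - (-1) * (4 * x ^ 3)) / (x ^ 4) ^ 2) x :=
    (hasDerivAt_const x (-1:ℝ)).div (hasDerivAt_pow 4 x) hx4
  have hge : HasDerivAt (fun y : ℝ => Real.exp (-1 / y ^ 4))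
      (Real.exp (-1 / x ^ 4) * ((0 * x ^ 4 - (-1) * (4 * x ^ 3)) / (x ^ 4) ^ 2)) x := hg.exp
  have heq : f =ᶠ[nhds x] fun y : ℝ => Real.exp (-1 / y ^ 4) := by
    filter_upwards [eventually_ne_nhds hx0] with y hy
    simp [hf, hy]
  refine ⟨_, hge.congr_of_eventuallyEq heq, ?_⟩
  have hfx : f x = Real.exp (-1 / x ^ 4) := by simp [hf, hx0]
  rw [hfx]
  have hE : 0 < Real.exp (-1 / x ^ 4) := Real.exp_pos _
  have hkey : 4 / x ^ 4 < γ := by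
    rw [div_lt_iff₀ (by positivity)]
    have hxx : x ≤ x ^ 4 := le_self_pow₀ hx1 (by norm_num)
    have : 4 < γ * x := by
      rw [div_lt_iff₀ hγ] at hxgt; linarith [mul_comm γ x]
    nlinarith
  have hd : Real.exp (-1 / x ^ 4) * ((0 * x ^ 4 - (-1) * (4 * x ^ 3)) / (x ^ 4) ^ 2) * x
      = Real.exp (-1 / x ^ 4) * (4 / x ^ 4) := by
    field_simp; ring
  rw [hd]
  calc Real.exp (-1 / x ^ 4) * (4 / x ^ 4) < Real.exp (-1 / x ^ 4) * γ :=
        (mul_lt_mul_iff_right₀ hE).2 hkey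
    _ = γ * Real.exp (-1 / x ^ 4) := mul_comm _ _
end

section
/- (One-step contraction for subgradient descent.) Suppose $\langle g, x - x^* \rangle \ge r\|g\|\|x - x^*\|$ with $g \ne 0$, $0 < r \le 1/\sqrt{2}$, and the step size is $\eta = r\alpha\|x - x^*\|/\|g\|$ for some $\alpha \ge 1$. Then $\|x - \eta g - x^*\|^2 \le (1 - r^2)\,\alpha^2\,\|x - x^*\|^2$. -/
open scoped RealInnerProductSpace

/-- One-step contraction for subgradient descent. -/
theorem stmt11 {F : Type*} [NormedAddCommGroup F] [InnerProductSpace ℝ F]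
    (x xstar g : F) (r α η : ℝ) (hg : g ≠ 0)
    (hr0 : 0 < r) (hr1 : r ≤ 1 / Real.sqrt 2) (hα : 1 ≤ α)
    (hangle : ⟪g, x - xstar⟫ ≥ r * ‖g‖ * ‖x - xstar‖)
    (hη : η = r * α * ‖x - xstar‖ / ‖g‖) :
    ‖x - η • g - xstar‖ ^ 2 ≤ (1 - r ^ 2) * α ^ 2 * ‖x - xstar‖ ^ 2 := by
  have hG : (0:ℝ) < ‖g‖ := norm_pos_iff.mpr hg
  have hD : (0:ℝ) ≤ ‖x - xstar‖ := norm_nonneg _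
  have hηnn : 0 ≤ η := by
    rw [hη]; positivity
  have hr2 : r ^ 2 ≤ 1 / 2 := by
    have h := pow_le_pow_left₀ hr0.le hr1 2
    rw [div_pow, one_pow, Real.sq_sqrt (by norm_num : (0:ℝ) ≤ 2)] at h
    exact h
  have key : x - η • g - xstar = (x - xstar) - η • g := by abel
  rw [key]
  have expand := norm_sub_sq_real (x - xstar) (η • g)
  rw [real_inner_smul_right, norm_smul] at expand
  have hsym : ⟪x - xstar, g⟫ = ⟪g, x - xstar⟫ := real_inner_comm _ _
  rw [hsym] at expand
  have hηG : η * ‖g‖ = r * α * ‖x - xstar‖ := by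
    rw [hη]; field_simp
  have hstep : -(2 * (η * ⟪g, x - xstar⟫)) ≤ -(2 * (η * (r * ‖g‖ * ‖x - xstar‖))) := by
    nlinarith [mul_le_mul_of_nonneg_left hangle hηnn]
  rw [expand]
  have hη2 : (‖η‖ * ‖g‖) ^ 2 = (r * α * ‖x - xstar‖) ^ 2 := by
    rw [Real.norm_eq_abs, abs_of_nonneg hηnn, hηG]
  have hηi : η * (r * ‖g‖ * ‖x - xstar‖) = r ^ 2 * α * ‖x - xstar‖ ^ 2 := by
    rw [hη]; field_simp
  rw [hη2]
  nlinarith [sq_nonneg ‖x - xstar‖, sq_nonneg (α - 1), mul_nonneg (mul_nonneg hr0.le hr0.le) (sq_nonneg ‖x - xstar‖), mul_le_mul_of_nonneg_right hr2 (mul_nonneg (sq_nonneg (α-1)) (sq_nonneg ‖x - xstar‖))]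
end

section
/- (Linear convergence of subgradient descent with geometrically decaying step size.) Let $f : \mathbb{R}^n \to \mathbb{R}$ with minimizer $x^*$, and suppose the sequence $(x_t)$ is generated by $x_{t+1} = x_t - \eta_t g_t$ where $g_t \ne 0$ satisfies $\langle g_t, x_t - x^* \rangle \ge r\|g_t\|\|x_t - x^*\|$ (angle condition with $0 < r \le 1/\sqrt{2}$), and $\eta_t = r(1-r^2)^{t/2}\|x_0 - x^*\|/\|g_t\|$ (with $\eta_t = 0$ when $x_t = x^*$). Then for all $t$, $\|x_t - x^*\| \le (1 - r^2)^{t/2}\|x_0 - x^*\|$. -/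
open scoped RealInnerProductSpace Classical

/-- Linear convergence of subgradient descent with geometrically
decaying step size (Theorem 1). -/
theorem stmt13 {F : Type*} [NormedAddCommGroup F] [InnerProductSpace ℝ F]
    (x g : ℕ → F) (xstar : F) (r : ℝ)
    (hr0 : 0 < r) (hr1 : r ≤ 1 / Real.sqrt 2)
    (hg : ∀ t, x t ≠ xstar → g t ≠ 0)
    (hangle : ∀ t, x t ≠ xstar →
      ⟪g t, x t - xstar⟫ ≥ r * ‖g t‖ * ‖x t - xstar‖)
    (hupdate : ∀ t, x (t + 1) =
      if x t = xstar then x t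
      else x t - ((r * (1 - r ^ 2) ^ ((t : ℝ) / 2) * ‖x 0 - xstar‖) / ‖g t‖) • g t) :
    ∀ t, ‖x t - xstar‖ ≤ (1 - r ^ 2) ^ ((t : ℝ) / 2) * ‖x 0 - xstar‖ := by
  have hs2 : (Real.sqrt 2) ^ 2 = 2 := Real.sq_sqrt (by norm_num)
  have hr2 : r ^ 2 ≤ 1 / 2 := by
    have := pow_le_pow_left₀ hr0.le hr1 2
    rw [div_pow, one_pow, hs2] at this
    linarith
  have hbase : (0:ℝ) < 1 - r ^ 2 := by linarith
  intro t
  induction t with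
  | zero =>
    simp [Real.rpow_zero]
  | succ t ih =>
    have hq : (0:ℝ) < (1 - r ^ 2) ^ ((t:ℝ)/2) := Real.rpow_pos_of_pos hbase _
    have hq' : (0:ℝ) < (1 - r ^ 2) ^ (((t+1:ℕ):ℝ)/2) := Real.rpow_pos_of_pos hbase _
    set D := ‖x 0 - xstar‖ with hD
    have hD0 : 0 ≤ D := norm_nonneg _
    set q : ℝ := (1 - r ^ 2) ^ ((t:ℝ)/2) with hqdef
    set q' : ℝ := (1 - r ^ 2) ^ (((t+1:ℕ):ℝ)/2) with hq'def
    have hqq : q' ^ 2 = (1 - r ^ 2) * q ^ 2 := by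
      rw [hqdef, hq'def, ← Real.rpow_natCast ((1 - r ^ 2) ^ (((t+1:ℕ):ℝ)/2)) 2,
        ← Real.rpow_natCast ((1 - r ^ 2) ^ ((t:ℝ)/2)) 2,
        ← Real.rpow_mul hbase.le, ← Real.rpow_mul hbase.le]
      push_cast
      rw [div_mul_cancel₀ _ (two_ne_zero), div_mul_cancel₀ _ (two_ne_zero),
        Real.rpow_add hbase, Real.rpow_one]
      ring
    by_cases hx : x t = xstar
    · rw [hupdate t, if_pos hx, hx, sub_self, norm_zero]
      positivity
    · have hG : (0:ℝ) < ‖g t‖ := norm_pos_iff.mpr (hg t hx)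
      set η : ℝ := r * q * D / ‖g t‖ with hηdef
      have hη0 : 0 ≤ η := by positivity
      have hup : x (t+1) - xstar = (x t - xstar) - η • g t := by
        rw [hupdate t, if_neg hx]; abel
      have hsq : ‖x (t+1) - xstar‖ ^ 2
          = ‖x t - xstar‖ ^ 2 - 2 * (η * ⟪g t, x t - xstar⟫) + η ^ 2 * ‖g t‖ ^ 2 := by
        rw [hup, @norm_sub_sq_real, real_inner_smul_right, real_inner_comm,
          norm_smul, Real.norm_eq_abs, abs_of_nonneg hη0, mul_pow]
      have hηg : η * ‖g t‖ = r * q * D := by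
        rw [hηdef]; field_simp
      have hang := hangle t hx
      set R := ‖x t - xstar‖ with hR
      have hR0 : 0 ≤ R := norm_nonneg _
      have hinner : η * ⟪g t, x t - xstar⟫ ≥ η * (r * ‖g t‖ * R) :=
        mul_le_mul_of_nonneg_left hang hη0
      have key : ‖x (t+1) - xstar‖ ^ 2 ≤ (q' * D) ^ 2 := by
        rw [hsq]
        have h1 : η * (r * ‖g t‖ * R) = r * (r * q * D) * R := by
          rw [hηdef]; field_simp
        have h2 : η ^ 2 * ‖g t‖ ^ 2 = (r * q * D) ^ 2 := by
          rw [← mul_pow, hηg]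
        have h3 : (q' * D) ^ 2 = (1 - r ^ 2) * q ^ 2 * D ^ 2 := by
          rw [mul_pow, hqq]
        rw [h2, h3]
        have hBR : R ≤ q * D := ih
        nlinarith [mul_nonneg (sub_nonneg.mpr hBR) (mul_nonneg (mul_nonneg hq.le hD0)
          (by linarith : (0:ℝ) ≤ 1 - 2 * r ^ 2)), mul_nonneg (sub_nonneg.mpr hBR) hR0,
          hinner, h1]
      calc ‖x (t+1) - xstar‖ = Real.sqrt (‖x (t+1) - xstar‖ ^ 2) :=
            (Real.sqrt_sq (norm_nonneg _)).symm
        _ ≤ Real.sqrt ((q' * D) ^ 2) := Real.sqrt_le_sqrt key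
        _ = q' * D := Real.sqrt_sq (by positivity)
end

section
/- (One-step contraction with inexact radius estimate.) Suppose $\langle g, x - x^* \rangle \ge r\|g\|\|x - x^*\|$ with $g \ne 0$, $0 < r \le 1$, $0 < \beta \le 1/2$, $\beta \le q \le 1 - \beta$, $\alpha \ge 1$, and step size $\eta = rq\alpha\|x - x^*\|/\|g\|$. Then $\|x - \eta g - x^*\|^2 \le (1 + (\beta^2 - 2\beta)r^2)\,\alpha^2\,\|x - x^*\|^2$. -/
open scoped RealInnerProductSpace

lemma stmt15_alg (r β q α : ℝ) (hr0 : 0 < r) (hr1 : r ≤ 1) (hβ0 : 0 < β) (hβ1 : β ≤ 1/2)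
    (hq0 : β ≤ q) (hq1 : q ≤ 1 - β) (hα : 1 ≤ α) :
    1 - 2*r^2*q*α + r^2*q^2*α^2 ≤ (1 + (β^2 - 2*β)*r^2) * α^2 := by
  have hkey : r^2*q^2*α^2 ≤ r^2*α^2*(q - β*(1-β)) := by
    nlinarith [mul_nonneg (sub_nonneg.2 hq0) (sub_nonneg.2 hq1), sq_nonneg (r*α), mul_pos hr0 hr0, sq_nonneg α]
  have hr2 : (0:ℝ) ≤ 1 - r^2 := by nlinarith
  rcases le_or_gt α 2 with h2 | h2
  · nlinarith [mul_nonneg (mul_nonneg (sq_nonneg r) hβ0.le) (mul_nonneg (by linarith : (0:ℝ) ≤ α) (by linarith : (0:ℝ) ≤ α - 1)), mul_nonneg (mul_nonneg (mul_nonneg (sq_nonneg r) (by linarith : (0:ℝ) ≤ α)) (by linarith : (0:ℝ) ≤ 2 - α)) (sub_nonneg.2 hq0), mul_nonneg (mul_nonneg hβ0.le (by linarith : (0:ℝ) ≤ α)) (mul_nonneg (by linarith : (0:ℝ) ≤ α - 1) hr2)]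
  · nlinarith [mul_nonneg (mul_nonneg (mul_nonneg (sq_nonneg r) (by linarith : (0:ℝ) ≤ α)) (by linarith : (0:ℝ) ≤ α - 2)) (sub_nonneg.2 hq1), mul_nonneg (mul_nonneg hr2 (by linarith : (0:ℝ) ≤ α)) (by linarith : (0:ℝ) ≤ α - 2 + 2*β), mul_nonneg (by linarith : (0:ℝ) ≤ α - 1) (by nlinarith : (0:ℝ) ≤ 2*α*(1-β) - 1)]

/-- One-step contraction with inexact radius estimate. -/
theorem stmt15 {F : Type*} [NormedAddCommGroup F] [InnerProductSpace ℝ F]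
    (x xstar g : F) (r β q α η : ℝ) (hg : g ≠ 0)
    (hr0 : 0 < r) (hr1 : r ≤ 1) (hβ0 : 0 < β) (hβ1 : β ≤ 1 / 2)
    (hq0 : β ≤ q) (hq1 : q ≤ 1 - β) (hα : 1 ≤ α)
    (hangle : ⟪g, x - xstar⟫ ≥ r * ‖g‖ * ‖x - xstar‖)
    (hη : η = r * q * α * ‖x - xstar‖ / ‖g‖) :
    ‖x - η • g - xstar‖ ^ 2 ≤ (1 + (β ^ 2 - 2 * β) * r ^ 2) * α ^ 2 * ‖x - xstar‖ ^ 2 := by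
  have hG : (0:ℝ) < ‖g‖ := norm_pos_iff.mpr hg
  set n := ‖x - xstar‖ with hn
  have hn0 : (0:ℝ) ≤ n := norm_nonneg _
  have hq0' : (0:ℝ) < q := lt_of_lt_of_le hβ0 hq0
  have hη0 : 0 ≤ η := by
    rw [hη]; positivity
  have hηG : η * ‖g‖ = r * q * α * n := by
    rw [hη]; field_simp
  have hre : x - η • g - xstar = (x - xstar) - η • g := by
    abel
  have hexp : ‖x - η • g - xstar‖ ^ 2
      = n ^ 2 - 2 * η * ⟪g, x - xstar⟫ + η ^ 2 * ‖g‖ ^ 2 := by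
    rw [hre, norm_sub_sq_real, real_inner_smul_right, real_inner_comm, norm_smul,
      Real.norm_eq_abs, mul_pow, sq_abs]
    ring
  have h1 : 2 * η * (r * ‖g‖ * n) ≤ 2 * η * ⟪g, x - xstar⟫ := by
    apply mul_le_mul_of_nonneg_left hangle (by linarith)
  have h2 : η * (r * ‖g‖ * n) = r^2 * q * α * n^2 := by
    calc η * (r * ‖g‖ * n) = r * (η * ‖g‖) * n := by ring
    _ = r^2 * q * α * n^2 := by rw [hηG]; ring
  have h3 : η ^ 2 * ‖g‖ ^ 2 = r^2 * q^2 * α^2 * n^2 := by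
    calc η ^ 2 * ‖g‖ ^ 2 = (η * ‖g‖)^2 := by ring
    _ = r^2 * q^2 * α^2 * n^2 := by rw [hηG]; ring
  have hbound : ‖x - η • g - xstar‖ ^ 2 ≤ (1 - 2*r^2*q*α + r^2*q^2*α^2) * n^2 := by
    rw [hexp]
    nlinarith [h1, h2, h3]
  calc ‖x - η • g - xstar‖ ^ 2 ≤ (1 - 2*r^2*q*α + r^2*q^2*α^2) * n^2 := hbound
    _ ≤ ((1 + (β^2 - 2*β)*r^2) * α^2) * n^2 := by
        apply mul_le_mul_of_nonneg_right (stmt15_alg r β q α hr0 hr1 hβ0 hβ1 hq0 hq1 hα) (sq_nonneg n)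
    _ = (1 + (β ^ 2 - 2 * β) * r ^ 2) * α ^ 2 * n ^ 2 := by ring
end

section
/- (Linear convergence with inexact radius, Theorem 2.) Let $x^* \in \mathbb{R}^n$, $0 < r \le 1$, $0 < \beta \le 1/2$, and $R$ satisfy $\beta\|x_0 - x^*\| \le R \le (1-\beta)\|x_0 - x^*\|$. Suppose $x_{t+1} = x_t - \eta_t g_t$ with nonzero $g_t$ satisfying $\langle g_t, x_t - x^* \rangle \ge r\|g_t\|\|x_t - x^*\|$, and $\eta_t = r(1 + (\beta^2 - 2\beta)r^2)^{t/2} R / \|g_t\|$. Then $\|x_t - x^*\| \le (1 + (\beta^2 - 2\beta)r^2)^{t/2}\|x_0 - x^*\|$ for all $t$. -/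
open scoped RealInnerProductSpace Classical

/-!
Write `c = 1 + (β² - 2β) r²`, `D = ‖x₀ - x*‖` and `ρₜ = c^(t/2)`. Expanding the square and using
the angle condition, the step of length `s = r ρₜ R` gives
`‖xₜ₊₁ - x*‖² ≤ a² - 2 r s a + s²` with `a = ‖xₜ - x*‖`. The right-hand side is convex in `a`,
so on `[0, ρₜ D]` it is bounded by its values at the endpoints, and both are at most `c ρₜ² D²`:
at `a = 0` because `r ≤ 1` and `R ≤ (1 - β) D`, at `a = ρₜ D` because `(D - R)² ≤ (1 - β)² D²`.
-/

lemma norm_sub_smul_sq_le_of_angle {F : Type*} [NormedAddCommGroup F] [InnerProductSpace ℝ F]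
    {e g : F} {r η : ℝ} (hη : 0 ≤ η) (hangle : r * ‖g‖ * ‖e‖ ≤ ⟪g, e⟫) :
    ‖e - η • g‖ ^ 2 ≤ ‖e‖ ^ 2 - 2 * r * (η * ‖g‖) * ‖e‖ + (η * ‖g‖) ^ 2 := by
  have hexpand : ‖e - η • g‖ ^ 2 = ‖e‖ ^ 2 - 2 * η * ⟪g, e⟫ + (η * ‖g‖) ^ 2 := by
    rw [norm_sub_sq_real, real_inner_smul_right, norm_smul, Real.norm_of_nonneg hη,
      real_inner_comm]
    ring
  rw [hexpand]
  nlinarith [mul_le_mul_of_nonneg_left hangle hη]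

lemma sq_sub_mul_add_sq_le {r β R D b : ℝ} (hr0 : 0 ≤ r) (hr1 : r ≤ 1)
    (hR0 : β * D ≤ R) (hR1 : R ≤ (1 - β) * D) (hb0 : 0 ≤ b) (hbD : b ≤ D) :
    b ^ 2 - 2 * r * (r * R) * b + (r * R) ^ 2 ≤ (1 + (β ^ 2 - 2 * β) * r ^ 2) * D ^ 2 := by
  have hD : 0 ≤ D := hb0.trans hbD
  have hat0 : (r * R) ^ 2 ≤ (1 + (β ^ 2 - 2 * β) * r ^ 2) * D ^ 2 := by
    have hR : R ^ 2 ≤ ((1 - β) * D) ^ 2 := sq_le_sq' (by nlinarith) hR1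
    nlinarith [mul_le_mul_of_nonneg_left hR (sq_nonneg r), mul_nonneg (sq_nonneg D)
      (show 0 ≤ 1 - r ^ 2 by nlinarith)]
  have hatD : D ^ 2 - 2 * r * (r * R) * D + (r * R) ^ 2
      ≤ (1 + (β ^ 2 - 2 * β) * r ^ 2) * D ^ 2 := by
    nlinarith [mul_nonneg (sq_nonneg r) (mul_nonneg (sub_nonneg.2 hR0) (sub_nonneg.2 hR1)),
      mul_nonneg (sq_nonneg r) (mul_nonneg hD (sub_nonneg.2 hR0))]
  rcases hD.eq_or_lt with rfl | hDpos
  · obtain rfl : b = 0 := le_antisymm hbD hb0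
    simpa using hat0
  -- convexity: the quadratic `q` in `b` satisfies `D q(b) = (D - b) q(0) + b q(D) - b (D - b) D`
  refine le_of_mul_le_mul_left ?_ hDpos
  nlinarith [mul_nonneg (sub_nonneg.2 hbD) (sub_nonneg.2 hat0), mul_nonneg hb0 (sub_nonneg.2 hatD),
    mul_nonneg (mul_nonneg hb0 hD) (sub_nonneg.2 hbD)]

lemma norm_sub_step_le {F : Type*} [NormedAddCommGroup F] [InnerProductSpace ℝ F]
    {e g : F} {r β R D ρ : ℝ} (hr0 : 0 ≤ r) (hr1 : r ≤ 1) (hρ : 0 ≤ ρ) (hR : 0 ≤ R)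
    (hR0 : β * D ≤ R) (hR1 : R ≤ (1 - β) * D) (hg : g ≠ 0)
    (hangle : r * ‖g‖ * ‖e‖ ≤ ⟪g, e⟫) (he : ‖e‖ ≤ ρ * D) :
    ‖e - (r * ρ * R / ‖g‖) • g‖ ≤ √(1 + (β ^ 2 - 2 * β) * r ^ 2) * (ρ * D) := by
  set c := 1 + (β ^ 2 - 2 * β) * r ^ 2
  have hc : 0 ≤ c := by nlinarith [mul_nonneg (sq_nonneg r) (sq_nonneg (1 - β))]
  have hstep : r * ρ * R / ‖g‖ * ‖g‖ = r * (ρ * R) := by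
    rw [div_mul_cancel₀ _ (norm_ne_zero_iff.2 hg), mul_assoc]
  have hsq : ‖e - (r * ρ * R / ‖g‖) • g‖ ^ 2 ≤ c * (ρ * D) ^ 2 := by
    calc _ ≤ ‖e‖ ^ 2 - 2 * r * (r * (ρ * R)) * ‖e‖ + (r * (ρ * R)) ^ 2 := by
          rw [← hstep]
          exact norm_sub_smul_sq_le_of_angle (by positivity) hangle
      _ ≤ c * (ρ * D) ^ 2 := by
          refine sq_sub_mul_add_sq_le hr0 hr1 ?_ ?_ (norm_nonneg e) he
          · nlinarith [mul_le_mul_of_nonneg_left hR0 hρ]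
          · nlinarith [mul_le_mul_of_nonneg_left hR1 hρ]
  have hρD : 0 ≤ ρ * D := (norm_nonneg e).trans he
  rw [← pow_le_pow_iff_left₀ (norm_nonneg _) (by positivity) two_ne_zero, mul_pow,
    Real.sq_sqrt hc]
  exact hsq

lemma Real.rpow_natCast_succ_div_two {c : ℝ} (hc : 0 ≤ c) (t : ℕ) :
    c ^ (((t + 1 : ℕ) : ℝ) / 2) = c ^ ((t : ℝ) / 2) * √c := by
  rw [Real.sqrt_eq_rpow, ← Real.rpow_add' hc (by positivity)]
  push_cast
  ring_nf

theorem stmt16_general {F : Type*} [NormedAddCommGroup F] [InnerProductSpace ℝ F]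
    (x g : ℕ → F) (xstar : F) (r β R : ℝ)
    (hr0 : 0 < r) (hr1 : r ≤ 1) (hβ0 : 0 < β)
    (hR0 : β * ‖x 0 - xstar‖ ≤ R) (hR1 : R ≤ (1 - β) * ‖x 0 - xstar‖)
    (hg : ∀ t, x t ≠ xstar → g t ≠ 0)
    (hangle : ∀ t, x t ≠ xstar →
      ⟪g t, x t - xstar⟫ ≥ r * ‖g t‖ * ‖x t - xstar‖)
    (hupdate : ∀ t, x (t + 1) =
      if x t = xstar then x t
      else x t - ((r * (1 + (β ^ 2 - 2 * β) * r ^ 2) ^ ((t : ℝ) / 2) * R) / ‖g t‖) • g t) :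
    ∀ t, ‖x t - xstar‖ ≤ (1 + (β ^ 2 - 2 * β) * r ^ 2) ^ ((t : ℝ) / 2) * ‖x 0 - xstar‖ := by
  set c := 1 + (β ^ 2 - 2 * β) * r ^ 2
  have hc : 0 ≤ c := by nlinarith [mul_nonneg (sq_nonneg r) (sq_nonneg (1 - β))]
  have hR : 0 ≤ R := (mul_nonneg hβ0.le (norm_nonneg _)).trans hR0
  intro t
  induction t with
  | zero => simp
  | succ t ih =>
    rw [hupdate, Real.rpow_natCast_succ_div_two hc]
    split_ifs with hx
    · rw [hx, sub_self, norm_zero]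
      positivity
    · rw [sub_right_comm]
      exact (norm_sub_step_le hr0.le hr1 (by positivity) hR hR0 hR1 (hg t hx) (hangle t hx)
        ih).trans_eq (by ring)

/-- Linear convergence with inexact radius estimate (Theorem 2). -/
theorem stmt16 {F : Type*} [NormedAddCommGroup F] [InnerProductSpace ℝ F]
    (x g : ℕ → F) (xstar : F) (r β R : ℝ)
    (hr0 : 0 < r) (hr1 : r ≤ 1) (hβ0 : 0 < β) (hβ1 : β ≤ 1 / 2)
    (hR0 : β * ‖x 0 - xstar‖ ≤ R) (hR1 : R ≤ (1 - β) * ‖x 0 - xstar‖)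
    (hg : ∀ t, x t ≠ xstar → g t ≠ 0)
    (hangle : ∀ t, x t ≠ xstar →
      ⟪g t, x t - xstar⟫ ≥ r * ‖g t‖ * ‖x t - xstar‖)
    (hupdate : ∀ t, x (t + 1) =
      if x t = xstar then x t
      else x t - ((r * (1 + (β ^ 2 - 2 * β) * r ^ 2) ^ ((t : ℝ) / 2) * R) / ‖g t‖) • g t) :
    ∀ t, ‖x t - xstar‖ ≤ (1 + (β ^ 2 - 2 * β) * r ^ 2) ^ ((t : ℝ) / 2) * ‖x 0 - xstar‖ :=
  stmt16_general x g xstar r β R hr0 hr1 hβ0 hR0 hR1 hg hangle hupdate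
end
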